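/- arXiv:2106.15932 — 5 statements merged into one kernel-verified Lean document; each statement's English description precedes it below -/
import Mathlib

section
/- Let A be a metric space, n, m ≥ 1, let f : (Fin n → A) → A admit Banach pattern θ (a finite nonempty subset of 𝕌_n), and for each k : Fin n let g k : (Fin m → A) → A admit Banach pattern ζ k (a finite nonempty subset of 𝕌_m). Then the composite h : (Fin m → A) → A defined by h y = f (fun k => g k y) admits the Banach pattern θ ∘ ⟨ζ⟩: for all y, y' : Fin m → A, dist (h y) (h y') ≤ max, over all α ∈ θ and all choices β : Fin n → (Fin m → ℝ) with β k ∈ ζ k for each k, of ∑ j, (∑ k, α k * β k j) * dist (y j) (y' j). -/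
/-- Composition of functions admitting Banach patterns admits the composed
Banach pattern `θ ∘ ⟨ζ⟩`. -/
theorem banach_pattern_composition
    {A : Type*} [MetricSpace A] {n m : ℕ} (hn : 1 ≤ n) (hm : 1 ≤ m)
    (f : (Fin n → A) → A)
    (θ : Finset (Fin n → ℝ)) (hθ : θ.Nonempty)
    (hθU : ∀ α ∈ θ, (∀ i, 0 ≤ α i) ∧ ∑ i, α i ≤ 1)
    (hf : ∀ x y : Fin n → A,
      dist (f x) (f y) ≤ θ.sup' hθ (fun α => ∑ i, α i * dist (x i) (y i)))
    (g : Fin n → (Fin m → A) → A)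
    (ζ : Fin n → Finset (Fin m → ℝ)) (hζ : ∀ k, (ζ k).Nonempty)
    (hζU : ∀ k, ∀ β ∈ ζ k, (∀ j, 0 ≤ β j) ∧ ∑ j, β j ≤ 1)
    (hg : ∀ k, ∀ y y' : Fin m → A,
      dist (g k y) (g k y') ≤ (ζ k).sup' (hζ k) (fun β => ∑ j, β j * dist (y j) (y' j))) :
    ∀ y y' : Fin m → A,
      dist (f (fun k => g k y)) (f (fun k => g k y')) ≤
        (θ ×ˢ Fintype.piFinset ζ).sup'
          (hθ.product (Fintype.piFinset_nonempty.mpr hζ))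
          (fun p => ∑ j, (∑ k, p.1 k * p.2 k j) * dist (y j) (y' j)) := by
  intro y y'
  refine (hf _ _).trans ?_
  apply Finset.sup'_le
  intro α hα
  choose β hβmem hβeq using fun k =>
    Finset.exists_mem_eq_sup' (hζ k) (fun β => ∑ j, β j * dist (y j) (y' j))
  have hβ : β ∈ Fintype.piFinset ζ := by
    rw [Fintype.mem_piFinset]; exact hβmem
  have h1 : ∑ k, α k * dist (g k y) (g k y') ≤
      ∑ k, α k * (∑ j, β k j * dist (y j) (y' j)) := by
    refine Finset.sum_le_sum fun k _ => ?_
    exact mul_le_mul_of_nonneg_left ((hg k y y').trans_eq (hβeq k))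
      ((hθU α hα).1 k)
  refine h1.trans ?_
  have h2 : ∑ k, α k * (∑ j, β k j * dist (y j) (y' j)) =
      ∑ j, (∑ k, α k * β k j) * dist (y j) (y' j) := by
    simp_rw [Finset.mul_sum, Finset.sum_mul]
    rw [Finset.sum_comm]
    ring_nf
  rw [h2]
  exact Finset.le_sup' (f := fun p => ∑ j, (∑ k, p.1 k * p.2 k j) * dist (y j) (y' j))
    (Finset.mem_product.mpr (⟨hα, hβ⟩ : (α, β).1 ∈ θ ∧ (α, β).2 ∈ Fintype.piFinset ζ))
end

section
/- (Quantitative diagonal property, semantic form.) Let X be a nonempty complete metric space and let f : X → X → X with real numbers α, β ≥ 0, α + β < 1, such that dist (f x y) (f x' y') ≤ α * dist x x' + β * dist y y' for all x, x', y, y'. Then: (i) for each x, the map y ↦ f x y is a β-contraction with unique fixed point G x; (ii) the map G : X → X satisfies dist (G x) (G x') ≤ (α / (1 - β)) * dist x x' with α / (1 - β) < 1, so G has a unique fixed point; (iii) the diagonal map x ↦ f x x is an (α + β)-contraction; and the fixed point of the diagonal map x ↦ f x x equals the fixed point of G, i.e. fix (fun x => f x x) = fix (fun x => fix (fun y =>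 f x y)). -/
private lemma uniqueFix {X : Type*} [MetricSpace X] [Nonempty X] [CompleteSpace X]
    (g : X → X) (k : ℝ) (hk0 : 0 ≤ k) (hk1 : k < 1)
    (h : ∀ x y, dist (g x) (g y) ≤ k * dist x y) : ∃! z, g z = z := by
  have hC : ContractingWith ⟨k, hk0⟩ g :=
    ⟨by exact_mod_cast hk1, LipschitzWith.of_dist_le_mul h⟩
  exact ⟨hC.fixedPoint, hC.fixedPoint_isFixedPt,
    fun y hy => hC.fixedPoint_unique hy⟩

/-- Quantitative diagonal property, semantic form. -/
theorem diagonal_fixedPoint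
    {X : Type*} [MetricSpace X] [Nonempty X] [CompleteSpace X]
    (f : X → X → X) (α β : ℝ) (hα0 : 0 ≤ α) (hβ0 : 0 ≤ β) (hαβ : α + β < 1)
    (hf : ∀ x x' y y', dist (f x y) (f x' y') ≤ α * dist x x' + β * dist y y') :
    -- (i) for each x, y ↦ f x y is a β-contraction with a unique fixed point
    (∀ x y y', dist (f x y) (f x y') ≤ β * dist y y') ∧
    (∀ x, ∃! y, f x y = y) ∧
    -- (ii) any map G of parametric fixed points is (α/(1-β))-Lipschitz with
    -- α/(1-β) < 1 and has a unique fixed point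
    (∀ G : X → X, (∀ x, f x (G x) = G x) →
      (∀ x x', dist (G x) (G x') ≤ (α / (1 - β)) * dist x x') ∧
      α / (1 - β) < 1 ∧ (∃! z, G z = z)) ∧
    -- (iii) the diagonal is an (α+β)-contraction with a unique fixed point
    (∀ x x', dist (f x x) (f x' x') ≤ (α + β) * dist x x') ∧
    (∃! d, f d d = d) ∧
    -- the fixed point of the diagonal equals the fixed point of G
    (∀ G : X → X, (∀ x, f x (G x) = G x) →
      ∀ d z : X, f d d = d → G z = z → d = z) := by
  have hβ1 : β < 1 := lt_of_le_of_lt (le_add_of_nonneg_left hα0) hαβ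
  have h1β : 0 < 1 - β := by linarith
  have hi : ∀ x y y', dist (f x y) (f x y') ≤ β * dist y y' := by
    intro x y y'
    have := hf x x y y'
    simpa using this
  have hdiag : ∀ x x', dist (f x x) (f x' x') ≤ (α + β) * dist x x' := by
    intro x x'
    have := hf x x' x x'
    linarith [this]
  have hdiagfix : ∃! d, f d d = d :=
    uniqueFix (fun x => f x x) (α + β) (by positivity) hαβ hdiag
  have hGlip : ∀ G : X → X, (∀ x, f x (G x) = G x) →
      ∀ x x', dist (G x) (G x') ≤ (α / (1 - β)) * dist x x' := by
    intro G hG x x'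
    have h1 : dist (G x) (G x') ≤ α * dist x x' + β * dist (G x) (G x') := by
      calc dist (G x) (G x') = dist (f x (G x)) (f x' (G x')) := by rw [hG, hG]
        _ ≤ α * dist x x' + β * dist (G x) (G x') := hf _ _ _ _
    rw [div_mul_eq_mul_div, le_div_iff₀ h1β]
    nlinarith [dist_nonneg (x := G x) (y := G x')]
  have hquot : α / (1 - β) < 1 := by
    rw [div_lt_one h1β]; linarith
  refine ⟨hi, fun x => uniqueFix (f x) β hβ0 hβ1 (hi x), ?_, hdiag, hdiagfix, ?_⟩
  · intro G hG
    exact ⟨hGlip G hG, hquot,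
      uniqueFix G (α / (1 - β)) (by positivity) hquot (hGlip G hG)⟩
  · intro G hG d z hd hz
    have hz' : f z z = z := by have := hG z; rwa [hz] at this
    obtain ⟨d₀, _, hu⟩ := hdiagfix
    rw [hu d hd, hu z hz']
end

section
/- (Quantitative amalgamation, semantic form.) Let X be a nonempty complete metric space, let n ≥ 1, and for each i : Fin n let f i : (Fin n → X) → X. Suppose there are nonnegative reals α i j and a constant c < 1 such that for all i, ∑ j, α i j ≤ c, and for all i and all x, y : Fin n → X, dist (f i x) (f i y) ≤ ∑ j, α i j * dist (x j) (y j). Suppose g : X → X satisfies f i (fun _ => x) = g x for all i and x (so g is a c-contraction with unique fixed point fix g). If s : Fin n → X satisfies s i = f i s for all i, then s i = fix g for all i; in particular all components s i coincide. -/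
/-- Quantitative amalgamation, semantic form. -/
theorem amalgamation_fixedPoint
    {X : Type*} [MetricSpace X] [Nonempty X] [CompleteSpace X]
    {n : ℕ} (hn : 1 ≤ n)
    (f : Fin n → (Fin n → X) → X)
    (α : Fin n → Fin n → ℝ) (hα : ∀ i j, 0 ≤ α i j)
    (c : ℝ) (hc : c < 1) (hsum : ∀ i, ∑ j, α i j ≤ c)
    (hlip : ∀ (i : Fin n) (x y : Fin n → X),
      dist (f i x) (f i y) ≤ ∑ j, α i j * dist (x j) (y j))
    (g : X → X) (hg : ∀ (i : Fin n) (x : X), f i (fun _ => x) = g x)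
    (s : Fin n → X) (hs : ∀ i, s i = f i s) :
    (∀ x y, dist (g x) (g y) ≤ c * dist x y) ∧
    (∃! x, g x = x) ∧
    (∀ x : X, g x = x → ∀ i, s i = x) ∧
    (∀ i j, s i = s j) := by
  have i0 : Fin n := ⟨0, hn⟩
  have hc0 : 0 ≤ c :=
    le_trans (Finset.sum_nonneg fun j _ => hα i0 j) (hsum i0)
  have hglip : ∀ x y, dist (g x) (g y) ≤ c * dist x y := by
    intro x y
    calc dist (g x) (g y) = dist (f i0 (fun _ => x)) (f i0 (fun _ => y)) := by
          rw [hg, hg]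
      _ ≤ ∑ j, α i0 j * dist x y := hlip i0 _ _
      _ = (∑ j, α i0 j) * dist x y := by rw [Finset.sum_mul]
      _ ≤ c * dist x y := by
          exact mul_le_mul_of_nonneg_right (hsum i0) dist_nonneg
  have hcontr : ContractingWith ⟨c, hc0⟩ g := by
    constructor
    · exact_mod_cast hc
    · exact LipschitzWith.of_dist_le_mul hglip
  have huniq : ∃! x, g x = x :=
    ⟨hcontr.fixedPoint g, hcontr.fixedPoint_isFixedPt,
      fun y hy => hcontr.fixedPoint_unique hy⟩
  have hforce : ∀ x : X, g x = x → ∀ i, s i = x := by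
    intro x hx i
    have hne : (Finset.univ : Finset (Fin n)).Nonempty := ⟨i0, Finset.mem_univ _⟩
    set M := Finset.univ.sup' hne (fun j => dist (s j) x) with hM
    have hM0 : 0 ≤ M := le_trans dist_nonneg (Finset.le_sup' (fun j => dist (s j) x) (Finset.mem_univ i0))
    have key : ∀ j : Fin n, dist (s j) x ≤ c * M := by
      intro j
      calc dist (s j) x = dist (f j s) (f j (fun _ => x)) := by
            rw [← hs j, hg, hx]
        _ ≤ ∑ k, α j k * dist (s k) x := hlip j _ _
        _ ≤ ∑ k, α j k * M := by
            refine Finset.sum_le_sum fun k _ => ?_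
            exact mul_le_mul_of_nonneg_left
              (Finset.le_sup' (fun j => dist (s j) x) (Finset.mem_univ k)) (hα j k)
        _ = (∑ k, α j k) * M := by rw [Finset.sum_mul]
        _ ≤ c * M := mul_le_mul_of_nonneg_right (hsum j) hM0
    have hMle : M ≤ c * M := Finset.sup'_le _ _ fun j _ => key j
    have hMzero : M ≤ 0 := by nlinarith
    have : dist (s i) x ≤ 0 :=
      le_trans (Finset.le_sup' (fun j => dist (s j) x) (Finset.mem_univ i)) hMzero
    exact dist_le_zero.mp this
  refine ⟨hglip, huniq, hforce, fun i j => ?_⟩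
  obtain ⟨x, hx, -⟩ := huniq
  rw [hforce x hx i, hforce x hx j]
end

section
/- The Bellman operator is a γ-contraction: for any finite Markov decision process, policy π, and discount factor γ ∈ (0,1), the Bellman operator T_π : (S → ℝ) → (S → ℝ) satisfies dist (T_π f) (T_π g) ≤ γ * dist f g for all f, g : S → ℝ, where S → ℝ carries the sup metric dist f g = max over s ∈ S of |f s − g s|. -/
/-- The Bellman operator of a finite MDP is a `γ`-contraction in the sup metric. -/
theorem bellman_operator_contraction
    {S A : Type*} [Fintype S] [Fintype A] [Nonempty S] [Nonempty A]
    (P : A → S → S → ℝ) (hP0 : ∀ a s s', 0 ≤ P a s s') (hP1 : ∀ a s, ∑ s', P a s s' = 1)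
    (R : A → S → ℝ) (hR0 : ∀ a s, 0 ≤ R a s) (hR1 : ∀ a s, R a s ≤ 1)
    (π : S → A → ℝ) (hπ0 : ∀ s a, 0 ≤ π s a) (hπ1 : ∀ s, ∑ a, π s a = 1)
    (γ : ℝ) (hγ0 : 0 < γ) (hγ1 : γ < 1)
    (T : (S → ℝ) → (S → ℝ))
    (hT : ∀ (f : S → ℝ) (s : S),
      T f s = (1 - γ) * ∑ a, π s a * R a s
                + γ * ∑ a, ∑ s', π s a * P a s s' * f s') :
    ∀ f g : S → ℝ, dist (T f) (T g) ≤ γ * dist f g := by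
  intro f g
  have hd0 : 0 ≤ dist f g := dist_nonneg
  rw [dist_pi_le_iff (by positivity)]
  intro s
  have key : ∀ s' : S, |f s' - g s'| ≤ dist f g := by
    intro s'
    rw [← Real.dist_eq]
    exact dist_le_pi_dist f g s'
  rw [Real.dist_eq, hT f s, hT g s]
  have : (1 - γ) * ∑ a, π s a * R a s + γ * ∑ a, ∑ s', π s a * P a s s' * f s'
      - ((1 - γ) * ∑ a, π s a * R a s + γ * ∑ a, ∑ s', π s a * P a s s' * g s')
      = γ * ∑ a, ∑ s', π s a * P a s s' * (f s' - g s') := by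
    rw [add_sub_add_left_eq_sub, ← mul_sub, ← Finset.sum_sub_distrib]
    congr 1
    refine Finset.sum_congr rfl fun a _ => ?_
    rw [← Finset.sum_sub_distrib]
    refine Finset.sum_congr rfl fun s' _ => ?_
    ring
  rw [this, abs_mul, abs_of_pos hγ0]
  gcongr
  calc |∑ a, ∑ s', π s a * P a s s' * (f s' - g s')|
      ≤ ∑ a, ∑ s', |π s a * P a s s' * (f s' - g s')| := by
        refine (Finset.abs_sum_le_sum_abs _ _).trans ?_
        gcongr with a
        exact Finset.abs_sum_le_sum_abs _ _
    _ ≤ ∑ a, ∑ s', π s a * P a s s' * dist f g := by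
        gcongr with a _ s'
        rw [abs_mul, abs_of_nonneg (mul_nonneg (hπ0 s a) (hP0 a s s'))]
        exact mul_le_mul_of_nonneg_left (key s') (mul_nonneg (hπ0 s a) (hP0 a s s'))
    _ = dist f g := by
        have : ∀ a, ∑ s', π s a * P a s s' * dist f g = π s a * dist f g := by
          intro a
          rw [show (∑ s', π s a * P a s s' * dist f g) = π s a * (∑ s', P a s s') * dist f g by
            rw [mul_assoc, Finset.sum_mul, Finset.mul_sum]
            exact Finset.sum_congr rfl fun s' _ => by ring]
          rw [hP1]; ring
        simp only [this, ← Finset.sum_mul, hπ1, one_mul]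
end

section
/- (Bellman equation.) For any finite Markov decision process, policy π, and discount factor γ ∈ (0,1), there is a unique value function V : S → ℝ satisfying the Bellman equation T_π V = V; moreover value iteration converges to V at a geometric rate: for every f : S → ℝ and every natural number k, dist (T_π^[k] f) V ≤ γ^k * dist f V in the sup metric on S → ℝ, so in particular for every ε > 0 there exists n such that for all m ≥ n, dist (T_π^[m] f) V ≤ ε. -/
/-- Bellman equation: the Bellman operator has a unique fixed point `V`, and
value iteration converges to `V` at a geometric rate. -/
theorem bellman_equation
    {S A : Type*} [Fintype S] [Fintype A] [Nonempty S] [Nonempty A]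
    (P : A → S → S → ℝ) (hP0 : ∀ a s s', 0 ≤ P a s s') (hP1 : ∀ a s, ∑ s', P a s s' = 1)
    (R : A → S → ℝ) (hR0 : ∀ a s, 0 ≤ R a s) (hR1 : ∀ a s, R a s ≤ 1)
    (π : S → A → ℝ) (hπ0 : ∀ s a, 0 ≤ π s a) (hπ1 : ∀ s, ∑ a, π s a = 1)
    (γ : ℝ) (hγ0 : 0 < γ) (hγ1 : γ < 1)
    (T : (S → ℝ) → (S → ℝ))
    (hT : ∀ (f : S → ℝ) (s : S),
      T f s = (1 - γ) * ∑ a, π s a * R a s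
                + γ * ∑ a, ∑ s', π s a * P a s s' * f s') :
    (∃! V : S → ℝ, T V = V) ∧
      ∀ V : S → ℝ, T V = V →
        (∀ (f : S → ℝ) (k : ℕ), dist (T^[k] f) V ≤ γ ^ k * dist f V) ∧
        ∀ (f : S → ℝ) (ε : ℝ), 0 < ε → ∃ n : ℕ, ∀ m : ℕ, n ≤ m →
          dist (T^[m] f) V ≤ ε := by
  -- contraction property
  have key : ∀ f g : S → ℝ, dist (T f) (T g) ≤ γ * dist f g := by
    intro f g
    have hd : 0 ≤ γ * dist f g := mul_nonneg hγ0.le dist_nonneg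
    rw [dist_pi_le_iff hd]
    intro s
    rw [Real.dist_eq, hT, hT]
    have hsub : ((1 - γ) * ∑ a, π s a * R a s + γ * ∑ a, ∑ s', π s a * P a s s' * f s')
        - ((1 - γ) * ∑ a, π s a * R a s + γ * ∑ a, ∑ s', π s a * P a s s' * g s')
        = γ * ∑ a, ∑ s', π s a * P a s s' * (f s' - g s') := by
      rw [show (∑ a, ∑ s', π s a * P a s s' * (f s' - g s'))
          = ∑ a, ∑ s', (π s a * P a s s' * f s' - π s a * P a s s' * g s') by
        congr 1; ext a; congr 1; ext s'; ring]
      simp [Finset.sum_sub_distrib]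
      ring
    rw [hsub, abs_mul, abs_of_pos hγ0]
    apply mul_le_mul_of_nonneg_left _ hγ0.le
    calc |∑ a, ∑ s', π s a * P a s s' * (f s' - g s')|
        ≤ ∑ a, ∑ s', |π s a * P a s s' * (f s' - g s')| := by
          refine (Finset.abs_sum_le_sum_abs _ _).trans ?_
          exact Finset.sum_le_sum fun a _ => Finset.abs_sum_le_sum_abs _ _
      _ ≤ ∑ a, ∑ s', π s a * P a s s' * dist f g := by
          refine Finset.sum_le_sum fun a _ => Finset.sum_le_sum fun s' _ => ?_
          rw [abs_mul, abs_of_nonneg (mul_nonneg (hπ0 s a) (hP0 a s s'))]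
          refine mul_le_mul_of_nonneg_left ?_ (mul_nonneg (hπ0 s a) (hP0 a s s'))
          rw [← Real.dist_eq]
          exact dist_le_pi_dist f g s'
      _ = dist f g := by
          simp only [mul_assoc, ← Finset.mul_sum, ← Finset.sum_mul, hP1, one_mul]
          rw [hπ1, one_mul]
  have hK : ContractingWith ⟨γ, hγ0.le⟩ T := by
    constructor
    · exact_mod_cast hγ1
    · exact LipschitzWith.of_dist_le_mul (by exact_mod_cast key)
  set V : S → ℝ := ContractingWith.fixedPoint T hK with hVdef
  have hVfix : T V = V := ContractingWith.fixedPoint_isFixedPt hK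
  have huniq : ∀ W : S → ℝ, T W = W → W = V := by
    intro W hW
    have h1 : dist W V ≤ γ * dist W V := by
      calc dist W V = dist (T W) (T V) := by rw [hW, hVfix]
        _ ≤ γ * dist W V := key W V
    have h2 : dist W V = 0 := by nlinarith [dist_nonneg (x := W) (y := V)]
    exact eq_of_dist_eq_zero h2
  have rate : ∀ V' : S → ℝ, T V' = V' → ∀ (f : S → ℝ) (k : ℕ),
      dist (T^[k] f) V' ≤ γ ^ k * dist f V' := by
    intro V' hV' f k
    induction k with
    | zero => simp
    | succ k ih =>
      rw [Function.iterate_succ_apply']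
      calc dist (T (T^[k] f)) V' = dist (T (T^[k] f)) (T V') := by rw [hV']
        _ ≤ γ * dist (T^[k] f) V' := key _ _
        _ ≤ γ * (γ ^ k * dist f V') := by
            exact mul_le_mul_of_nonneg_left ih hγ0.le
        _ = γ ^ (k + 1) * dist f V' := by ring
  refine ⟨⟨V, hVfix, huniq⟩, ?_⟩
  intro V' hV'
  refine ⟨rate V' hV', ?_⟩
  intro f ε hε
  rcases eq_or_lt_of_le (dist_nonneg (x := f) (y := V')) with hd0 | hdpos
  · refine ⟨0, fun m _ => ?_⟩
    calc dist (T^[m] f) V' ≤ γ ^ m * dist f V' := rate V' hV' f m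
      _ = 0 := by rw [← hd0]; ring
      _ ≤ ε := hε.le
  · obtain ⟨n, hn⟩ := exists_pow_lt_of_lt_one (div_pos hε hdpos) hγ1
    refine ⟨n, fun m hm => ?_⟩
    calc dist (T^[m] f) V' ≤ γ ^ m * dist f V' := rate V' hV' f m
      _ ≤ γ ^ n * dist f V' := by
          exact mul_le_mul_of_nonneg_right
            (pow_le_pow_of_le_one hγ0.le hγ1.le hm) dist_nonneg
      _ ≤ (ε / dist f V') * dist f V' := by
          exact mul_le_mul_of_nonneg_right hn.le dist_nonneg
      _ = ε := div_mul_cancel₀ ε hdpos.ne'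
end
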